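/- arXiv:2510.16793 — 3 statements merged into one kernel-verified Lean document; each statement's English description precedes it below -/
import Mathlib

section
/- Define p_k^{(n)} := ∑_{i_1+...+i_k = n, i_m ≥ 1} ∏_{m=1}^k i_m / binom(I_m+1, 2), where I_m = i_1+...+i_m. Then these probabilities satisfy the recurrence binom(n+1,2)·p_k^{(n)} − 2·binom(n,2)·p_k^{(n−1)} + binom(n−1,2)·p_k^{(n−2)} = p_{k−1}^{(n−1)} for all n ≥ 2 and k ≥ 1. -/
open Finset

/-- The partial sum `I_m = i_0 + ... + i_m` (0-indexed). -/
def partialSum {k : ℕ} (i : Fin k → ℕ) (m : Fin k) : ℕ :=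
  ∑ j ∈ Finset.univ.filter (fun j : Fin k => j ≤ m), i j

/-- `p n k = P(f₀(Tₙ) = k + 2)`, Buchta's explicit formula: the sum over `k`-tuples
of positive integers summing to `n` of `∏_m i_m / binom(I_m + 1, 2)`. -/
noncomputable def chainProb (n k : ℕ) : ℚ :=
  ∑ i ∈ (Fintype.piFinset fun _ : Fin k => Finset.range (n + 1)).filter
      (fun i : Fin k → ℕ => (∀ m, 1 ≤ i m) ∧ ∑ m, i m = n),
    ∏ m : Fin k, (i m : ℚ) / (Nat.choose (partialSum i m + 1) 2 : ℚ)

/-!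
Tuples with a zero entry have weight zero, so `chainProb n k` is a sum over all of
`Finset.Nat.antidiagonalTuple k n`. Splitting off the last part `b` of a tuple, whose partial sum
is the full `n`, gives `binom(n+1,2) p_{k+1}^{(n)} = ∑_{a+b=n} b p_k^{(a)}`. The second difference
in `n` of such a convolution with the weights `b` is the point mass at `b = 1`.
-/

theorem partialSum_last {k : ℕ} (i : Fin (k + 1) → ℕ) : partialSum i (Fin.last k) = ∑ m, i m := by
  simp [partialSum, Fin.le_last]

theorem partialSum_snoc_castSucc {k : ℕ} (y : Fin k → ℕ) (b : ℕ) (m : Fin k) :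
    partialSum (Fin.snoc y b : Fin (k + 1) → ℕ) m.castSucc = partialSum y m := by
  simp [partialSum, sum_filter, Fin.sum_univ_castSucc]

theorem Finset.Nat.sum_antidiagonalTuple_succ_snoc {M : Type*} [AddCommMonoid M] (k n : ℕ)
    (f : (Fin (k + 1) → ℕ) → M) :
    ∑ x ∈ Nat.antidiagonalTuple (k + 1) n, f x =
      ∑ p ∈ antidiagonal n, ∑ y ∈ Nat.antidiagonalTuple k p.1, f (Fin.snoc y p.2) := by
  rw [sum_sigma']
  refine sum_nbij' (fun x => ⟨(∑ m, Fin.init x m, x (Fin.last k)), Fin.init x⟩)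
    (fun q => Fin.snoc q.2 q.1.2) ?_ ?_ ?_ ?_ ?_
  · intro x hx
    simp_all [Nat.mem_antidiagonalTuple, Fin.sum_univ_castSucc, Fin.init]
  · rintro ⟨⟨a, b⟩, y⟩ h
    simp_all [Nat.mem_antidiagonalTuple, Fin.sum_univ_castSucc]
  · intro x _
    simp
  · rintro ⟨⟨a, b⟩, y⟩ h
    simp_all [Nat.mem_antidiagonalTuple]
  · intro x _
    simp

theorem Finset.Nat.sum_antidiagonal_succ_snd_mul {R : Type*} [NonAssocSemiring R] (f : ℕ → R)
    (n : ℕ) :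
    ∑ p ∈ antidiagonal (n + 1), (p.2 : R) * f p.1 =
      ∑ p ∈ antidiagonal n, (p.2 : R) * f p.1 + ∑ p ∈ antidiagonal n, f p.1 := by
  rw [Nat.sum_antidiagonal_succ', ← sum_add_distrib]
  simp [add_mul]

theorem Finset.Nat.sum_antidiagonal_snd_mul_second_diff {R : Type*} [CommRing R] (f : ℕ → R)
    (n : ℕ) :
    ∑ p ∈ antidiagonal (n + 2), (p.2 : R) * f p.1
      - 2 * ∑ p ∈ antidiagonal (n + 1), (p.2 : R) * f p.1
      + ∑ p ∈ antidiagonal n, (p.2 : R) * f p.1 = f (n + 1) := by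
  rw [sum_antidiagonal_succ_snd_mul, sum_antidiagonal_succ_snd_mul,
    Nat.sum_antidiagonal_succ' (f := fun p => f p.1)]
  ring

def chainWeight {k : ℕ} (i : Fin k → ℕ) : ℚ :=
  ∏ m, (i m : ℚ) / ((partialSum i m + 1).choose 2 : ℚ)

theorem chainWeight_snoc {k : ℕ} (y : Fin k → ℕ) (b : ℕ) :
    chainWeight (Fin.snoc y b : Fin (k + 1) → ℕ) =
      chainWeight y * (b / ((∑ m, y m + b + 1).choose 2 : ℚ)) := by
  simp only [chainWeight, Fin.prod_univ_castSucc, Fin.snoc_castSucc, Fin.snoc_last,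
    partialSum_snoc_castSucc, partialSum_last, Fin.sum_univ_castSucc]

theorem chainProb_eq_sum_antidiagonalTuple (n k : ℕ) :
    chainProb n k = ∑ i ∈ Nat.antidiagonalTuple k n, chainWeight i := by
  refine sum_subset (fun i hi => ?_) (fun i hi hpos => ?_)
  · simp_all [Nat.mem_antidiagonalTuple]
  · rw [Nat.mem_antidiagonalTuple] at hi
    have hle : ∀ m, i m ≤ n := fun m => hi ▸ single_le_sum (by simp) (mem_univ m)
    obtain ⟨m, hm⟩ : ∃ m, i m = 0 := by
      by_contra! h
      exact hpos (by simp [hi, Nat.lt_succ_of_le (hle _), Nat.one_le_iff_ne_zero.mpr (h _)])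
    exact prod_eq_zero (mem_univ m) (by simp [hm])

theorem choose_two_mul_chainProb_succ (n k : ℕ) :
    ((n + 1).choose 2 : ℚ) * chainProb n (k + 1) =
      ∑ p ∈ antidiagonal n, (p.2 : ℚ) * chainProb p.1 k := by
  rw [chainProb_eq_sum_antidiagonalTuple, mul_sum, Nat.sum_antidiagonalTuple_succ_snoc]
  refine sum_congr rfl fun p hp => ?_
  rw [chainProb_eq_sum_antidiagonalTuple, mul_sum]
  refine sum_congr rfl fun y hy => ?_
  rw [HasAntidiagonal.mem_antidiagonal] at hp
  rw [Nat.mem_antidiagonalTuple] at hy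
  rw [chainWeight_snoc, hy, hp]
  rcases Nat.eq_zero_or_pos n with rfl | hn
  · simp [(Nat.add_eq_zero_iff.mp hp).2]
  · have : ((n + 1).choose 2 : ℚ) ≠ 0 := Nat.cast_ne_zero.mpr (Nat.choose_pos (by omega)).ne'
    field_simp

/-- The recurrence relation for the probabilities `p_k^{(n)}`:
`binom(n+1,2) p_k^{(n)} - 2 binom(n,2) p_k^{(n-1)} + binom(n-1,2) p_k^{(n-2)} = p_{k-1}^{(n-1)}`. -/
theorem chainProb_recurrence (n k : ℕ) (hn : 2 ≤ n) (hk : 1 ≤ k) :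
    (Nat.choose (n + 1) 2 : ℚ) * chainProb n k
      - 2 * (Nat.choose n 2 : ℚ) * chainProb (n - 1) k
      + (Nat.choose (n - 1) 2 : ℚ) * chainProb (n - 2) k
      = chainProb (n - 1) (k - 1) := by
  obtain ⟨n, rfl⟩ := Nat.exists_eq_add_of_le' hn
  obtain ⟨k, rfl⟩ := Nat.exists_eq_add_of_le' hk
  have h := Nat.sum_antidiagonal_snd_mul_second_diff (fun a => chainProb a k) n
  simp only [← choose_two_mul_chainProb_succ] at h
  simpa [mul_assoc] using h
end

section
/- Define α(t) = (√(1+8e^t) − 1)/2. Then for every integer r ≥ 1, the r-th derivative of α at t = 0 equals ∑_{k=1}^r (−1)^{k−1} S(r,k) · 2^k (2k−2)! / (3^{2k−1} (k−1)!), where S(r,k) are Stirling numbers of the second kind. -/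
/-
Write `α = f ∘ exp`. Differentiating `e^{kt} f⁽ᵏ⁾(eᵗ)` gives `k` times itself plus the next such
term with `k + 1`, which is the recurrence `S(r+1,k+1) = (k+1) S(r,k+1) + S(r,k)`; hence
`(d/dt)ʳ f(eᵗ) = ∑ₖ S(r,k) e^{kt} f⁽ᵏ⁾(eᵗ)`. For `k ≥ 1` the derivatives of
`f(y) = (√(1+8y) - 1)/2` are `(1/2)ₖ 8ᵏ (1+8y)^{1/2-k} / 2`, where the falling factorial
`(1/2)ₖ` equals `(-1)^{k-1} (2k-2)! / (2^{2k-1} (k-1)!)`; at `y = 1`, `9^{1/2-k} = 3^{1-2k}`.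
-/

open Real Finset

/-- Stirling numbers of the second kind `S(r,k)`. -/
def stirling2 : ℕ → ℕ → ℕ
  | 0, 0 => 1
  | 0, _ + 1 => 0
  | _ + 1, 0 => 0
  | r + 1, k + 1 => (k + 1) * stirling2 r (k + 1) + stirling2 r k

theorem stirling2_eq_stirlingSecond : stirling2 = Nat.stirlingSecond := by
  ext r k
  induction r generalizing k with
  | zero => cases k <;> rfl
  | succ r ih =>
    cases k with
    | zero => rfl
    | succ k => simp only [stirling2, Nat.stirlingSecond_succ_succ, ih]

theorem Nat.sum_stirlingSecond_succ_mul {R : Type*} [CommSemiring R] (r : ℕ) (a : ℕ → R) :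
    ∑ k ∈ range (r + 2), (stirlingSecond (r + 1) k : R) * a k =
      ∑ k ∈ range (r + 1), (stirlingSecond r k : R) * (k * a k + a (k + 1)) := by
  have shift : ∑ k ∈ range (r + 1), (stirlingSecond r k : R) * (k * a k) =
      ∑ k ∈ range (r + 1), ((k + 1 : ℕ) : R) * stirlingSecond r (k + 1) * a (k + 1) := by
    rw [sum_range_succ', sum_range_succ _ r, stirlingSecond_eq_zero_of_lt (lt_add_one r)]
    simp only [Nat.cast_zero, mul_zero, zero_mul, add_zero]
    exact sum_congr rfl fun k _ => by ring
  rw [sum_range_succ' _ (r + 1), stirlingSecond_succ_zero, Nat.cast_zero, zero_mul, add_zero]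
  simp only [mul_add, sum_add_distrib]
  rw [shift, ← sum_add_distrib]
  exact sum_congr rfl fun k _ => by rw [stirlingSecond_succ_succ]; push_cast; ring

theorem hasDerivAt_descPochhammer_mul_rpow {p a b y : ℝ} (k : ℕ) (hy : 0 < a + b * y) :
    HasDerivAt (fun y => (descPochhammer ℝ k).eval p * b ^ k * (a + b * y) ^ (p - k))
      ((descPochhammer ℝ (k + 1)).eval p * b ^ (k + 1) * (a + b * y) ^ (p - (k + 1 : ℕ))) y := by
  have hlin : HasDerivAt (fun y => a + b * y) b y := by
    simpa using ((hasDerivAt_id y).const_mul b).const_add a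
  refine ((hlin.rpow_const (p := p - k) (Or.inl hy.ne')).const_mul
    ((descPochhammer ℝ k).eval p * b ^ k)).congr_deriv ?_
  rw [descPochhammer_succ_eval, show p - ((k + 1 : ℕ) : ℝ) = p - k - 1 by push_cast; ring]
  ring

theorem hasDerivAt_exp_mul_comp_exp {g : ℝ → ℝ} {d : ℝ} (k : ℕ) (t : ℝ)
    (hg : HasDerivAt g d (exp t)) :
    HasDerivAt (fun t => exp (k * t) * g (exp t))
      (k * (exp (k * t) * g (exp t)) + exp ((k + 1 : ℕ) * t) * d) t := by
  have hpow : HasDerivAt (fun t => exp (k * t)) (exp (k * t) * k) t := by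
    simpa using ((hasDerivAt_id t).const_mul (k : ℝ)).exp
  refine (hpow.mul (hg.comp t (hasDerivAt_exp t))).congr_deriv ?_
  rw [show ((k + 1 : ℕ) : ℝ) * t = k * t + t by push_cast; ring, exp_add, Function.comp_apply]
  ring

theorem iteratedDeriv_comp_exp {g : ℕ → ℝ → ℝ}
    (hg : ∀ k y, 0 < y → HasDerivAt (g k) (g (k + 1) y) y) (r : ℕ) :
    iteratedDeriv r (fun t => g 0 (exp t)) =
      fun t => ∑ k ∈ range (r + 1), (Nat.stirlingSecond r k : ℝ) * (exp (k * t) * g k (exp t)) := by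
  induction r with
  | zero => ext t; simp
  | succ r ih =>
    ext t
    rw [iteratedDeriv_succ, ih, Nat.sum_stirlingSecond_succ_mul]
    exact (HasDerivAt.fun_sum fun k _ =>
      ((hasDerivAt_exp_mul_comp_exp k t (hg k _ (exp_pos t))).const_mul _)).deriv

theorem descPochhammer_eval_half_succ (k : ℕ) :
    (descPochhammer ℝ (k + 1)).eval (1 / 2) =
      (-1) ^ k * (2 * k).factorial / (2 ^ (2 * k + 1) * k.factorial) := by
  induction k with
  | zero => norm_num
  | succ k ih =>
    rw [descPochhammer_succ_eval, ih, show 2 * (k + 1) = 2 * k + 1 + 1 by ring,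
      Nat.factorial_succ, Nat.factorial_succ, Nat.factorial_succ]
    push_cast
    field_simp
    ring

theorem rpow_half_sub_natCast {x : ℝ} (hx : 0 < x) (n : ℕ) :
    x ^ ((1 : ℝ) / 2 - n) = √x / x ^ n := by
  rw [rpow_sub hx, rpow_natCast, sqrt_eq_rpow]

/-- For `α(t) = (√(1+8eᵗ) - 1)/2`, the `r`-th derivative at `t = 0` equals
`∑_{k=1}^r (-1)^(k-1) S(r,k) 2^k (2k-2)! / (3^(2k-1) (k-1)!)`. -/
theorem alpha_iteratedDeriv_at_zero (r : ℕ) (hr : 1 ≤ r) :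
    iteratedDeriv r (fun t : ℝ => (Real.sqrt (1 + 8 * Real.exp t) - 1) / 2) 0
      = ∑ k ∈ Finset.Icc 1 r,
          (-1 : ℝ) ^ (k - 1) * (stirling2 r k) * 2 ^ k * (Nat.factorial (2 * k - 2))
            / (3 ^ (2 * k - 1) * (Nat.factorial (k - 1))) := by
  set g : ℕ → ℝ → ℝ := fun k y =>
    (descPochhammer ℝ k).eval (1 / 2) * 8 ^ k * (1 + 8 * y) ^ ((1 : ℝ) / 2 - k)
  have hg : ∀ k y, 0 < y → HasDerivAt (g k) (g (k + 1) y) y := fun k y hy =>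
    hasDerivAt_descPochhammer_mul_rpow k (by positivity)
  have hS0 : Nat.stirlingSecond r 0 = 0 := by
    obtain ⟨n, rfl⟩ := Nat.exists_eq_add_of_le' hr
    rfl
  have hα : (fun t => (√(1 + 8 * exp t) - 1) / 2) = fun t => -(1 / 2) + g 0 (exp t) / 2 := by
    ext t
    simp only [g, sqrt_eq_rpow, descPochhammer_zero, Polynomial.eval_one, pow_zero, mul_one,
      CharP.cast_eq_zero, sub_zero, one_mul]
    ring
  rw [hα, iteratedDeriv_const_add hr, iteratedDeriv_div_const, iteratedDeriv_comp_exp hg]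
  beta_reduce
  rw [stirling2_eq_stirlingSecond, sum_range_succ', hS0, Nat.cast_zero, zero_mul, add_zero,
    ← Ico_add_one_right_eq_Icc, sum_Ico_eq_sum_range, Nat.add_sub_cancel, sum_div]
  refine sum_congr rfl fun k _ => ?_
  rw [add_comm 1 k, show 2 * (k + 1) - 2 = 2 * k by omega, show 2 * (k + 1) - 1 = 2 * k + 1 by omega]
  simp only [g, exp_zero, mul_zero, mul_one, Nat.add_sub_cancel]
  rw [descPochhammer_eval_half_succ, show (1 : ℝ) + 8 = 3 ^ 2 by norm_num,
    rpow_half_sub_natCast (by norm_num), sqrt_sq (by norm_num), show (8 : ℝ) = 2 ^ 3 by norm_num,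
    ← pow_mul, ← pow_mul]
  field_simp
  ring
end

section
/- Define μ(t) = (√(1+8e^t)−1)/2 − 1 and, for x > 0, let I(x) = sup_{t∈ℝ} (xt − μ(t)) be its Legendre–Fenchel transform. Then I(x) = x·log(x/2) + x·arsinh(2x) − x − (1/2)√(1+4x²) + 3/2 for all x > 0. -/
open Real

/-- `μ(t) = (√(1+8eᵗ)-1)/2 - 1`. -/
noncomputable def mu (t : ℝ) : ℝ := (Real.sqrt (1 + 8 * Real.exp t) - 1) / 2 - 1

/-! Substituting `v = √(1 + 8eᵗ)`, so that `t = log ((v² - 1)/8)` and `μ(t) = (v - 3)/2`, turns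
`xt - μ(t)` into `x log (v² - 1) - v/2` up to a constant, a concave function of `v > 1`. Its
critical point `w` satisfies `4wx = w² - 1`, i.e. `w = 2x + √(1 + 4x²)`, and the tangent-line
bound at `w` comes from `log r ≤ r - 1` applied to the two factors of
`(v² - 1)/(w² - 1) = (v - 1)/(w - 1) · (v + 1)/(w + 1)`. -/

theorem mul_log_sub_log_le_of_critical {x v w : ℝ} (hv : 1 < v) (hw : 1 < w)
    (hx : 4 * w * x = w ^ 2 - 1) :
    x * (log (v ^ 2 - 1) - log (w ^ 2 - 1)) ≤ (v - w) / 2 := by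
  have hx0 : 0 ≤ x := by nlinarith
  have hw₁ : 0 < w - 1 := by linarith
  have hw₂ : 0 < w + 1 := by linarith
  have hv₁ : 0 < (v - 1) / (w - 1) := div_pos (by linarith) hw₁
  have hv₂ : 0 < (v + 1) / (w + 1) := div_pos (by linarith) hw₂
  have hsplit : log (v ^ 2 - 1) - log (w ^ 2 - 1)
      = log ((v - 1) / (w - 1)) + log ((v + 1) / (w + 1)) := by
    rw [← log_mul hv₁.ne' hv₂.ne', ← log_div (by nlinarith) (by nlinarith), div_mul_div_comm]
    congr 2 <;> ring
  calc x * (log (v ^ 2 - 1) - log (w ^ 2 - 1))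
      ≤ x * ((v - 1) / (w - 1) - 1 + ((v + 1) / (w + 1) - 1)) := by
        rw [hsplit]
        gcongr
        · exact log_le_sub_one_of_pos hv₁
        · exact log_le_sub_one_of_pos hv₂
    _ = (v - w) / 2 := by
        field_simp
        linear_combination (v - w) * hx

theorem mu_log_sq_sub_one_div_eight {v : ℝ} (hv : 1 < v) :
    mu (log ((v ^ 2 - 1) / 8)) = (v - 3) / 2 := by
  have hpos : 0 < (v ^ 2 - 1) / 8 := by nlinarith
  rw [mu, exp_log hpos, show 1 + 8 * ((v ^ 2 - 1) / 8) = v ^ 2 by ring,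
    sqrt_sq (by linarith)]
  ring

theorem log_sq_sqrt_one_add_eight_exp (t : ℝ) :
    log ((√(1 + 8 * exp t) ^ 2 - 1) / 8) = t := by
  rw [sq_sqrt (by positivity)]
  simp

theorem one_lt_sqrt_one_add_eight_exp (t : ℝ) : 1 < √(1 + 8 * exp t) := by
  rw [lt_sqrt zero_le_one]
  linarith [exp_pos t]

theorem range_sub_mu (x : ℝ) :
    Set.range (fun t : ℝ => x * t - mu t)
      = (fun v => x * log ((v ^ 2 - 1) / 8) - (v - 3) / 2) '' Set.Ioi 1 := by
  ext z
  constructor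
  · rintro ⟨t, rfl⟩
    refine ⟨√(1 + 8 * exp t), one_lt_sqrt_one_add_eight_exp t, ?_⟩
    simp only [log_sq_sqrt_one_add_eight_exp, mu]
    ring
  · rintro ⟨v, hv, rfl⟩
    exact ⟨log ((v ^ 2 - 1) / 8), by simp only [mu_log_sq_sub_one_div_eight hv]⟩

/-- For `x > 0`, the Legendre–Fenchel transform `I(x) = sup_t (xt - μ(t))` equals
`x log(x/2) + x arsinh(2x) - x - √(1+4x²)/2 + 3/2`. -/
theorem legendre_transform_mu (x : ℝ) (hx : 0 < x) :
    IsLUB (Set.range fun t : ℝ => x * t - mu t)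
      (x * Real.log (x / 2) + x * Real.arsinh (2 * x) - x
        - Real.sqrt (1 + 4 * x ^ 2) / 2 + 3 / 2) := by
  set s := √(1 + 4 * x ^ 2) with hs
  have hs2 : s ^ 2 = 1 + 4 * x ^ 2 := sq_sqrt (by positivity)
  have hs1 : 1 ≤ s := by nlinarith [sqrt_nonneg (1 + 4 * x ^ 2)]
  set w := 2 * x + s
  have hw : 1 < w := by linarith
  have hcrit : 4 * w * x = w ^ 2 - 1 := by linear_combination -hs2
  have hvalue : x * log ((w ^ 2 - 1) / 8) - (w - 3) / 2
      = x * log (x / 2) + x * arsinh (2 * x) - x - s / 2 + 3 / 2 := by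
    rw [arsinh, show (2 * x) ^ 2 = 4 * x ^ 2 by ring, ← hs,
      show (w ^ 2 - 1) / 8 = x / 2 * w by linear_combination -hcrit / 8,
      log_mul (by positivity) (by positivity)]
    ring
  rw [range_sub_mu, ← hvalue]
  refine IsGreatest.isLUB ⟨⟨w, hw, rfl⟩, ?_⟩
  rintro _ ⟨v, hv : 1 < v, rfl⟩
  have hv2 : 0 < v ^ 2 - 1 := by nlinarith
  have hw2 : 0 < w ^ 2 - 1 := by nlinarith
  have htangent := mul_log_sub_log_le_of_critical hv hw hcrit
  dsimp only
  rw [log_div hv2.ne' (by norm_num), log_div hw2.ne' (by norm_num)]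
  linarith
end
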